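/- Let S be the unilateral shift on ℓ² and A = S + I. Then A is hyponormal but |A²| ≠ |A|². -/

import Mathlib

open scoped LinearPMap

noncomputable section

namespace AbsPaper

variable {H : Type} [NormedAddCommGroup H] [InnerProductSpace ℂ H] [CompleteSpace H]

/-- The composition `S ∘ T` of two unbounded operators, defined on the natural domain
`{x ∈ D(T) : T x ∈ D(S)}`. -/
def comp (S T : H →ₗ.[ℂ] H) : H →ₗ.[ℂ] H where
  domain := (S.domain.comap T.toFun).map T.domain.subtype
  toFun := S.toFun ∘ₗ (T.toFun.restrict (p := S.domain.comap T.toFun) (q := S.domain)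
      fun _ hx => hx) ∘ₗ
    (Submodule.equivMapOfInjective T.domain.subtype (Submodule.injective_subtype _)
      (S.domain.comap T.toFun)).symm.toLinearMap

/-- A bounded everywhere-defined operator viewed as an unbounded operator. -/
def ofCLM (B : H →L[ℂ] H) : H →ₗ.[ℂ] H := (B : H →ₗ[ℂ] H).toPMap ⊤

/-- An unbounded operator is positive if `⟪T x, x⟫ ≥ 0` on its domain. -/
def IsPositivePMap (T : H →ₗ.[ℂ] H) : Prop :=
  ∀ x : T.domain, 0 ≤ (inner ℂ (T x) (x : H) : ℂ).re ∧ (inner ℂ (T x) (x : H) : ℂ).im = 0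

/-- `S` is the (positive self-adjoint) square root of `T`. -/
def IsSqrtOf (S T : H →ₗ.[ℂ] H) : Prop :=
  IsSelfAdjoint S ∧ IsPositivePMap S ∧ comp S S = T

/-- `R` is the absolute value `|T| = √(T*T)` of `T`. -/
def IsAbsOf (R T : H →ₗ.[ℂ] H) : Prop := IsSqrtOf R (comp T† T)

/-- `R` is the absolute value `|B| = √(B*B)` of a bounded operator `B`. -/
def IsAbsCLM (R B : H →L[ℂ] H) : Prop :=
  IsSelfAdjoint R ∧ R.IsPositive ∧ R ∘L R = (ContinuousLinearMap.adjoint B) ∘L B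

/-- An unbounded operator is normal if it is densely defined, closed and `T*T = TT*`. -/
def IsNormalPMap (T : H →ₗ.[ℂ] H) : Prop :=
  Dense (T.domain : Set H) ∧ T.IsClosed ∧ comp T† T = comp T T†

/-- An unbounded operator is hyponormal if it is densely defined, `D(T) ⊆ D(T*)` and
`‖T* x‖ ≤ ‖T x‖` on `D(T)`. -/
def IsHyponormalPMap (T : H →ₗ.[ℂ] H) : Prop :=
  Dense (T.domain : Set H) ∧ T.domain ≤ T†.domain ∧
    ∀ (x : H) (hx : x ∈ T.domain) (hx' : x ∈ T†.domain), ‖T† ⟨x, hx'⟩‖ ≤ ‖T ⟨x, hx⟩‖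

/-- A bounded operator is hyponormal if `‖B* x‖ ≤ ‖B x‖` everywhere. -/
def IsHyponormalCLM (B : H →L[ℂ] H) : Prop :=
  ∀ x : H, ‖(ContinuousLinearMap.adjoint B) x‖ ≤ ‖B x‖

/-- The form order `T ≤ S` between positive self-adjoint unbounded operators:
`D(S^(1/2)) ⊆ D(T^(1/2))` and `‖T^(1/2) x‖ ≤ ‖S^(1/2) x‖` there. -/
def FormLE (T S : H →ₗ.[ℂ] H) : Prop :=
  ∀ sT sS : H →ₗ.[ℂ] H, IsSqrtOf sT T → IsSqrtOf sS S →
    sS.domain ≤ sT.domain ∧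
      ∀ (x : H) (hx : x ∈ sS.domain) (hx' : x ∈ sT.domain),
        ‖sT ⟨x, hx'⟩‖ ≤ ‖sS ⟨x, hx⟩‖

/-- The real part `(A + A*)/2` of an unbounded operator. -/
def rePart (A : H →ₗ.[ℂ] H) : H →ₗ.[ℂ] H := ((2 : ℂ)⁻¹ : ℂ) • (A + A†)

/-- The imaginary part `(A - A*)/(2i)` of an unbounded operator. -/
def imPart (A : H →ₗ.[ℂ] H) : H →ₗ.[ℂ] H := ((2 * Complex.I)⁻¹ : ℂ) • (A + -A†)

/-- `T` is boundedly invertible: bijective from its domain onto `H` with bounded inverse. -/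
def BoundedlyInvertible (T : H →ₗ.[ℂ] H) : Prop :=
  ∃ Tinv : H →L[ℂ] H, (∀ x : T.domain, Tinv (T x) = x) ∧
    ∀ y : H, ∃ hy : Tinv y ∈ T.domain, T ⟨Tinv y, hy⟩ = y

/-- The spectrum of an unbounded operator. -/
def specPMap (T : H →ₗ.[ℂ] H) : Set ℂ :=
  {lam : ℂ | ¬ BoundedlyInvertible (T + ofCLM (-(lam • (1 : H →L[ℂ] H))))}

/-- The `n`-th power of an unbounded operator. -/
def ppow (T : H →ₗ.[ℂ] H) : ℕ → (H →ₗ.[ℂ] H)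
  | 0 => ofCLM 1
  | n + 1 => comp T (ppow T n)

/-- `T` is quasinormal: `T = U|T|` is its polar decomposition and `U|T| ⊆ |T|U`. -/
def IsQuasinormalPMap (T : H →ₗ.[ℂ] H) : Prop :=
  Dense (T.domain : Set H) ∧ T.IsClosed ∧
    ∃ (U : H →L[ℂ] H) (R : H →ₗ.[ℂ] H), IsAbsOf R T ∧ (∀ x : H, ‖U x‖ ≤ ‖x‖) ∧
      T = comp (ofCLM U) R ∧ comp (ofCLM U) R ≤ comp R (ofCLM U)

/-- A projection-valued (spectral) measure on the Borel sets of `ℂ`. -/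
structure PVM (H : Type) [NormedAddCommGroup H] [InnerProductSpace ℂ H] [CompleteSpace H] where
  P : Set ℂ → (H →L[ℂ] H)
  selfAdjoint : ∀ s, MeasurableSet s → IsSelfAdjoint (P s)
  mul_inter : ∀ s t, MeasurableSet s → MeasurableSet t → P s ∘L P t = P (s ∩ t)
  empty : P ∅ = 0
  univ : P Set.univ = 1
  countably_additive : ∀ (f : ℕ → Set ℂ), (∀ n, MeasurableSet (f n)) →
    Pairwise (Function.onFun Disjoint f) → ∀ x : H,
      HasSum (fun n => P (f n) x) (P (⋃ n, f n) x)

/-- `E` is the spectral measure of the operator `A`. -/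
def IsSpectralMeasureOf (A : H →ₗ.[ℂ] H) (E : PVM H) : Prop :=
  ∃ μ : H → MeasureTheory.Measure ℂ,
    (∀ (x : H) (s : Set ℂ), MeasurableSet s →
        μ x s = ENNReal.ofReal ((inner ℂ (E.P s x) x : ℂ).re)) ∧
    (∀ x : H, x ∈ A.domain ↔ MeasureTheory.Integrable (fun z : ℂ => ‖z‖ ^ 2) (μ x)) ∧
    ∀ x : A.domain, (inner ℂ (A x) (x : H) : ℂ) = ∫ z : ℂ, z ∂(μ (x : H))

/-- Two (normal) unbounded operators strongly commute if their spectral measures commute. -/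
def StronglyCommutes (A B : H →ₗ.[ℂ] H) : Prop :=
  ∃ EA EB : PVM H, IsSpectralMeasureOf A EA ∧ IsSpectralMeasureOf B EB ∧
    ∀ s t : Set ℂ, MeasurableSet s → MeasurableSet t →
      EA.P s ∘L EB.P t = EB.P t ∘L EA.P s


/-! If `S*S = 1` then `SS*` is a projection, so `SS* ≤ 1 = S*S`: in Loewner order this is
hyponormality of `S`, and `A*A - AA*` does not change when `1` is added to `A`.
If `|A²| = |A|²`, squaring gives `(A²)*A² = (A*A)²`; but for `A = S + 1` the difference of the
two sides is `(S* + 1)(1 - SS*)(S + 1) = 1 - SS* ≠ 0`. -/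

section StarRing

variable {R : Type*} [Ring R] [StarRing R]

theorem star_mul_self_sub_mul_star_add_one (a : R) :
    star (a + 1) * (a + 1) - (a + 1) * star (a + 1) = star a * a - a * star a := by
  simp only [star_add, star_one]
  noncomm_ring

theorem isStarProjection_mul_star_of_star_mul_self_eq_one {s : R} (hs : star s * s = 1) :
    IsStarProjection (s * star s) where
  isIdempotentElem := by
    rw [IsIdempotentElem, mul_assoc, ← mul_assoc (star s), hs, one_mul]
  isSelfAdjoint := IsSelfAdjoint.mul_star_self s

theorem star_sq_mul_sq_sub_sq_star_mul_self_add_one {s : R} (hs : star s * s = 1) :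
    star ((s + 1) * (s + 1)) * ((s + 1) * (s + 1))
      - (star (s + 1) * (s + 1)) * (star (s + 1) * (s + 1)) = 1 - s * star s := by
  have hleft : (star s + 1) * (1 - s * star s) = 1 - s * star s := by
    calc (star s + 1) * (1 - s * star s) = star s + 1 - star s * s * star s - s * star s := by
          noncomm_ring
      _ = 1 - s * star s := by rw [hs]; noncomm_ring
  have hright : (1 - s * star s) * (s + 1) = 1 - s * star s := by
    calc (1 - s * star s) * (s + 1) = s + 1 - s * (star s * s) - s * star s := by noncomm_ring
      _ = 1 - s * star s := by rw [hs]; noncomm_ring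
  calc star ((s + 1) * (s + 1)) * ((s + 1) * (s + 1))
        - (star (s + 1) * (s + 1)) * (star (s + 1) * (s + 1))
      = (star s + 1) * (star s * s - s * star s) * (s + 1) := by
        simp only [star_mul, star_add, star_one]
        noncomm_ring
    _ = 1 - s * star s := by rw [hs, hleft, hright]

variable [PartialOrder R] [StarOrderedRing R]

theorem mul_star_le_star_mul_self_of_star_mul_self_eq_one {s : R} (hs : star s * s = 1) :
    s * star s ≤ star s * s :=
  hs ▸ (isStarProjection_mul_star_of_star_mul_self_eq_one hs).le_one

theorem mul_star_add_one_le {a : R} (ha : a * star a ≤ star a * a) :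
    (a + 1) * star (a + 1) ≤ star (a + 1) * (a + 1) := by
  rwa [← sub_nonneg, star_mul_self_sub_mul_star_add_one, sub_nonneg]

end StarRing

theorem isHyponormalCLM_iff_mul_star_le (B : H →L[ℂ] H) :
    IsHyponormalCLM B ↔ B * star B ≤ star B * B := by
  have hre (x : H) :
      (star B * B - B * star B).reApplyInnerSelf x = ‖B x‖ ^ 2 - ‖star B x‖ ^ 2 := by
    rw [B.apply_norm_sq_eq_inner_adjoint_left, (star B).apply_norm_sq_eq_inner_adjoint_left,
      ContinuousLinearMap.reApplyInnerSelf_apply, sub_apply, inner_sub_left,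
      map_sub, ContinuousLinearMap.star_eq_adjoint, ContinuousLinearMap.adjoint_adjoint]
    rfl
  simp only [ContinuousLinearMap.le_def, ContinuousLinearMap.isPositive_def', hre, sub_nonneg,
    sq_le_sq₀ (norm_nonneg _) (norm_nonneg _),
    (IsSelfAdjoint.star_mul_self B).sub (IsSelfAdjoint.mul_star_self B), true_and]
  rfl

/-- For the unilateral shift `S` on `ℓ²` (`S*S = 1`, `SS* ≠ 1`) and `A = S + 1`,
`A` is hyponormal but `|A²| ≠ |A|²`. -/
theorem stmt_7 (S : lp (fun _ : ℕ => ℂ) 2 →L[ℂ] lp (fun _ : ℕ => ℂ) 2)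
    (hS1 : (ContinuousLinearMap.adjoint S) ∘L S = 1)
    (hS2 : S ∘L (ContinuousLinearMap.adjoint S) ≠ 1) :
    IsHyponormalCLM (S + 1) ∧
      ∀ R1 R2 : lp (fun _ : ℕ => ℂ) 2 →L[ℂ] lp (fun _ : ℕ => ℂ) 2,
        IsAbsCLM R1 (S + 1) → IsAbsCLM R2 ((S + 1) ∘L (S + 1)) → R2 ≠ R1 ∘L R1 := by
  change star S * S = 1 at hS1
  change S * star S ≠ 1 at hS2
  refine ⟨(isHyponormalCLM_iff_mul_star_le _).2 <| mul_star_add_one_le <|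
    mul_star_le_star_mul_self_of_star_mul_self_eq_one hS1, ?_⟩
  rintro R1 R2 ⟨-, -, hR1⟩ ⟨-, -, hR2⟩ rfl
  change R1 * R1 = star (S + 1) * (S + 1) at hR1
  change R1 * R1 * (R1 * R1) = star ((S + 1) * (S + 1)) * ((S + 1) * (S + 1)) at hR2
  have hdiff := star_sq_mul_sq_sub_sq_star_mul_self_add_one hS1
  rw [← hR2, ← hR1, sub_self] at hdiff
  exact hS2 (sub_eq_zero.1 hdiff.symm).symm

end AbsPaper
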